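/- Let 𝔤 = 𝔥 ⊕ ℝe₇ be a 7-dimensional Lie algebra where 𝔥 is a 6-dimensional nilpotent Lie algebra acting trivially on ℝe₇ (so e₇ is central and de⁷ = 0). If 𝔥 admits a half-flat SU(3)-structure (ω, ψ₊ + iψ₋), meaning d(½ω²) = 0 and dψ₊ = 0, then the 4-form φ = ½ω² + ψ₊ ∧ e⁷ on 𝔤 is closed and is the dual 4-form of a G2-structure; hence 𝔤 admits a cocalibrated G2-structure. -/

import Mathlib

/- STATEMENT 17: Let 𝔤 = 𝔥 ⊕ ℝe₇ with 𝔥 a 6-dimensional nilpotent Lie algebra acting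
trivially on ℝe₇.  If 𝔥 carries a half-flat SU(3)-structure (ω, ψ₊ + iψ₋) — i.e.
d(½ω²) = 0 and dψ₊ = 0 — then φ = ½ω² + ψ₊∧e⁷ is a closed 4-form on 𝔤 which is the
dual 4-form of a G2-structure; hence 𝔤 admits a cocalibrated G2-structure.

The SU(3)-structure is encoded by an adapted coframe: a basis b of 𝔥 in which ω, ψ₋,
ψ₊ take the standard values ω = f¹²+f³⁴+f⁵⁶, ψ₋ = −f²⁴⁶+f¹³⁶+f¹⁴⁵+f²³⁵,
ψ₊ = f¹³⁵−f¹⁴⁶−f²³⁶−f²⁴⁵; a 4-form is the dual of a G2-structure iff in some basis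
of 𝔤 it takes the standard values Φ₀ = f¹²³⁴+f¹²⁵⁶+f³⁴⁵⁶+f²⁴⁶⁷−f¹³⁶⁷−f¹⁴⁵⁷−f²³⁵⁷.
d is the Chevalley–Eilenberg differential.  (0-based indices below.) -/

noncomputable section

open Module

/-- Kronecker delta -/
def δ {n : ℕ} (a b : Fin n) : ℝ := if a = b then 1 else 0

/-- value of fᵃ∧fᵇ∧fᶜ on basis vectors (e_i,e_j,e_k) -/
def fm3 {n : ℕ} (a b c i j k : Fin n) : ℝ :=
  Matrix.det !![δ a i, δ a j, δ a k; δ b i, δ b j, δ b k; δ c i, δ c j, δ c k]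

/-- value of fᵃ∧fᵇ∧fᶜ∧fᵈ on basis vectors -/
def fm4 {n : ℕ} (a b c d i j k l : Fin n) : ℝ :=
  Matrix.det !![δ a i, δ a j, δ a k, δ a l; δ b i, δ b j, δ b k, δ b l;
                δ c i, δ c j, δ c k, δ c l; δ d i, δ d j, δ d k, δ d l]

/-- coefficients of ω = f¹²+f³⁴+f⁵⁶ -/
def Ωc (i j : Fin 6) : ℝ :=
  (δ 0 i * δ 1 j - δ 0 j * δ 1 i) + (δ 2 i * δ 3 j - δ 2 j * δ 3 i)
    + (δ 4 i * δ 5 j - δ 4 j * δ 5 i)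

/-- coefficients of ψ₋ = −f²⁴⁶+f¹³⁶+f¹⁴⁵+f²³⁵ -/
def Ψmc (i j k : Fin 6) : ℝ :=
  -fm3 1 3 5 i j k + fm3 0 2 5 i j k + fm3 0 3 4 i j k + fm3 1 2 4 i j k

/-- coefficients of ψ₊ = f¹³⁵−f¹⁴⁶−f²³⁶−f²⁴⁵ -/
def Ψpc (i j k : Fin 6) : ℝ :=
  fm3 0 2 4 i j k - fm3 0 3 5 i j k - fm3 1 2 5 i j k - fm3 1 3 4 i j k

/-- coefficients of the standard G2 4-form Φ₀ -/
def Φc (i j k l : Fin 7) : ℝ :=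
  fm4 0 1 2 3 i j k l + fm4 0 1 4 5 i j k l + fm4 2 3 4 5 i j k l
    + fm4 1 3 5 6 i j k l - fm4 0 2 5 6 i j k l - fm4 0 3 4 6 i j k l
    - fm4 1 2 4 6 i j k l

/-- Chevalley–Eilenberg differential of a 3-form (given the Lie bracket `br`) -/
def d3b {L : Type*} (br : L → L → L) (α : L → L → L → ℝ) (x₀ x₁ x₂ x₃ : L) : ℝ :=
  -α (br x₀ x₁) x₂ x₃ + α (br x₀ x₂) x₁ x₃ - α (br x₀ x₃) x₁ x₂
    - α (br x₁ x₂) x₀ x₃ + α (br x₁ x₃) x₀ x₂ - α (br x₂ x₃) x₀ x₁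

/-- Chevalley–Eilenberg differential of a 4-form (given the Lie bracket `br`) -/
def d4b {L : Type*} (br : L → L → L) (φ : L → L → L → L → ℝ)
    (x₀ x₁ x₂ x₃ x₄ : L) : ℝ :=
  -φ (br x₀ x₁) x₂ x₃ x₄ + φ (br x₀ x₂) x₁ x₃ x₄ - φ (br x₀ x₃) x₁ x₂ x₄
    + φ (br x₀ x₄) x₁ x₂ x₃ - φ (br x₁ x₂) x₀ x₃ x₄ + φ (br x₁ x₃) x₀ x₂ x₄
    - φ (br x₁ x₄) x₀ x₂ x₃ - φ (br x₂ x₃) x₀ x₁ x₄ + φ (br x₂ x₄) x₀ x₁ x₃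
    - φ (br x₃ x₄) x₀ x₁ x₂

/-! ### Auxiliary material -/

set_option maxHeartbeats 1000000 in
theorem det4aux (M : Matrix (Fin 4) (Fin 4) ℝ) : M.det =
    M 0 0 * (M 1 1 * (M 2 2 * M 3 3 - M 2 3 * M 3 2) - M 1 2 * (M 2 1 * M 3 3 - M 2 3 * M 3 1)
      + M 1 3 * (M 2 1 * M 3 2 - M 2 2 * M 3 1))
    - M 0 1 * (M 1 0 * (M 2 2 * M 3 3 - M 2 3 * M 3 2) - M 1 2 * (M 2 0 * M 3 3 - M 2 3 * M 3 0)
      + M 1 3 * (M 2 0 * M 3 2 - M 2 2 * M 3 0))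
    + M 0 2 * (M 1 0 * (M 2 1 * M 3 3 - M 2 3 * M 3 1) - M 1 1 * (M 2 0 * M 3 3 - M 2 3 * M 3 0)
      + M 1 3 * (M 2 0 * M 3 1 - M 2 1 * M 3 0))
    - M 0 3 * (M 1 0 * (M 2 1 * M 3 2 - M 2 2 * M 3 1) - M 1 1 * (M 2 0 * M 3 2 - M 2 2 * M 3 0)
      + M 1 2 * (M 2 0 * M 3 1 - M 2 1 * M 3 0)) := by
  rw [Matrix.det_succ_row_zero]
  simp [Fin.sum_univ_succ, Matrix.det_fin_three,
    show (Fin.succ 2 : Fin 4) = 3 by decide, show (Fin.castSucc 2 : Fin 4) = 2 by decide,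
    show Fin.succAbove (2:Fin 4) 2 = 3 by decide, show Fin.succAbove (1:Fin 4) 2 = 3 by decide,
    show Fin.succAbove (3:Fin 4) 2 = 2 by decide]
  ring

theorem fm3_eq {n : ℕ} (a b c i j k : Fin n) : fm3 a b c i j k =
    δ a i * (δ b j * δ c k - δ b k * δ c j) - δ a j * (δ b i * δ c k - δ b k * δ c i)
      + δ a k * (δ b i * δ c j - δ b j * δ c i) := by
  simp [fm3, Matrix.det_fin_three]; ring

theorem fm4_eq {n : ℕ} (a b c d i j k l : Fin n) : fm4 a b c d i j k l =
    δ a i * (δ b j * (δ c k * δ d l - δ c l * δ d k) - δ b k * (δ c j * δ d l - δ c l * δ d j)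
      + δ b l * (δ c j * δ d k - δ c k * δ d j))
    - δ a j * (δ b i * (δ c k * δ d l - δ c l * δ d k) - δ b k * (δ c i * δ d l - δ c l * δ d i)
      + δ b l * (δ c i * δ d k - δ c k * δ d i))
    + δ a k * (δ b i * (δ c j * δ d l - δ c l * δ d j) - δ b j * (δ c i * δ d l - δ c l * δ d i)
      + δ b l * (δ c i * δ d j - δ c j * δ d i))
    - δ a l * (δ b i * (δ c j * δ d k - δ c k * δ d j) - δ b j * (δ c i * δ d k - δ c k * δ d i)
      + δ b k * (δ c i * δ d j - δ c j * δ d i)) := by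
  rw [fm4, det4aux]
  simp [Matrix.cons_val_two, Matrix.cons_val_three, Matrix.vecTail, Matrix.vecHead]

/-- the index swap 0↔1, 2↔3, 4↔5 on `Fin 6` -/
def τ6 : Fin 6 → Fin 6 := ![1, 0, 3, 2, 5, 4]

lemma τ6invol : ∀ x, τ6 (τ6 x) = x := by decide

/-- the swap as an equivalence -/
def τe : Fin 6 ≃ Fin 6 := ⟨τ6, τ6, τ6invol, τ6invol⟩

/-- the value of ω in the swapped frame, as a function of `Fin 7` indices -/
def Ω7 (i j : Fin 7) : ℝ :=
  (δ 1 i * δ 0 j - δ 1 j * δ 0 i) + (δ 3 i * δ 2 j - δ 3 j * δ 2 i)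
    + (δ 5 i * δ 4 j - δ 5 j * δ 4 i)

/-- the value of ψ₊ in the swapped frame, as a function of `Fin 7` indices -/
def Ψ7 (i j k : Fin 7) : ℝ :=
  fm3 1 3 5 i j k - fm3 0 2 5 i j k - fm3 0 3 4 i j k - fm3 1 2 4 i j k

theorem δτ (a : Fin 6) (i : Fin 7) (h : i.1 < 6) :
    δ a (τ6 ⟨i.1, h⟩) = δ ((τ6 a).castSucc) i := by
  by_cases hc : a = τ6 ⟨i.1, h⟩
  · rw [δ, if_pos hc, δ, if_pos]
    have h2 : (τ6 a) = ⟨i.1, h⟩ := by rw [hc, τ6invol]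
    exact Fin.ext (by rw [h2]; simp)
  · rw [δ, if_neg hc, δ, if_neg]
    intro hc2
    apply hc
    have h2 : τ6 a = ⟨i.1, h⟩ := Fin.ext (by simpa using congrArg Fin.val hc2)
    exact (τ6invol a).symm.trans (congrArg τ6 h2)

set_option maxHeartbeats 2000000 in
theorem keyPoly (i j k l : Fin 7) :
    ((Ω7 i j * Ω7 k l - Ω7 i k * Ω7 j l + Ω7 i l * Ω7 j k)
      + (Ψ7 i j k * δ 6 l - Ψ7 i j l * δ 6 k + Ψ7 i k l * δ 6 j - Ψ7 j k l * δ 6 i))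
      = Φc i j k l := by
  simp only [Ω7, Ψ7, Φc, fm4_eq, fm3_eq]
  ring

theorem half_flat_gives_cocalibrated
    (𝔥 : Type*) [LieRing 𝔥] [LieAlgebra ℝ 𝔥] [Module.Finite ℝ 𝔥]
    (hdim : finrank ℝ 𝔥 = 6)
    (hnil : LieRing.IsNilpotent 𝔥)
    (ω : 𝔥 [⋀^Fin 2]→ₗ[ℝ] ℝ) (ψm ψp : 𝔥 [⋀^Fin 3]→ₗ[ℝ] ℝ)
    -- (ω, ψ₋) is an SU(3)-structure with real volume part ψ₊, via an adapted coframe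
    (b : Basis (Fin 6) ℝ 𝔥)
    (hω : ∀ i j, ω ![b i, b j] = Ωc i j)
    (hψm : ∀ i j k, ψm ![b i, b j, b k] = Ψmc i j k)
    (hψp : ∀ i j k, ψp ![b i, b j, b k] = Ψpc i j k)
    -- half-flat: d(½ω²) = 0 and dψ₊ = 0
    (hσ : ∀ x₀ x₁ x₂ x₃ x₄ : 𝔥,
      d4b (fun x y => ⁅x, y⁆)
        (fun a b' c d => ω ![a, b'] * ω ![c, d] - ω ![a, c] * ω ![b', d]
          + ω ![a, d] * ω ![b', c]) x₀ x₁ x₂ x₃ x₄ = 0)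
    (hψ : ∀ x₀ x₁ x₂ x₃ : 𝔥,
      d3b (fun x y => ⁅x, y⁆) (fun a b' c => ψp ![a, b', c]) x₀ x₁ x₂ x₃ = 0) :
    -- φ = ½ω² + ψ₊∧e⁷ on 𝔤 = 𝔥 × ℝ (with bracket ⁅(x,s),(y,t)⁆ = (⁅x,y⁆,0))
    (∀ x₀ x₁ x₂ x₃ x₄ : 𝔥 × ℝ,
      d4b (fun x y : 𝔥 × ℝ => (⁅x.1, y.1⁆, 0))
        (fun a b' c d =>
          (ω ![a.1, b'.1] * ω ![c.1, d.1] - ω ![a.1, c.1] * ω ![b'.1, d.1]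
            + ω ![a.1, d.1] * ω ![b'.1, c.1])
          + (ψp ![a.1, b'.1, c.1] * d.2 - ψp ![a.1, b'.1, d.1] * c.2
            + ψp ![a.1, c.1, d.1] * b'.2 - ψp ![b'.1, c.1, d.1] * a.2))
        x₀ x₁ x₂ x₃ x₄ = 0) ∧
    ∃ B : Basis (Fin 7) ℝ (𝔥 × ℝ), ∀ i j k l : Fin 7,
      ((ω ![(B i).1, (B j).1] * ω ![(B k).1, (B l).1]
          - ω ![(B i).1, (B k).1] * ω ![(B j).1, (B l).1]
          + ω ![(B i).1, (B l).1] * ω ![(B j).1, (B k).1])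
        + (ψp ![(B i).1, (B j).1, (B k).1] * (B l).2
          - ψp ![(B i).1, (B j).1, (B l).1] * (B k).2
          + ψp ![(B i).1, (B k).1, (B l).1] * (B j).2
          - ψp ![(B j).1, (B k).1, (B l).1] * (B i).2)) = Φc i j k l := by
  constructor
  · -- closedness
    intro x₀ x₁ x₂ x₃ x₄
    have h0 := hσ x₀.1 x₁.1 x₂.1 x₃.1 x₄.1
    have ha := hψ x₀.1 x₁.1 x₂.1 x₃.1
    have hb := hψ x₀.1 x₁.1 x₂.1 x₄.1
    have hc := hψ x₀.1 x₁.1 x₃.1 x₄.1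
    have hd := hψ x₀.1 x₂.1 x₃.1 x₄.1
    have he := hψ x₁.1 x₂.1 x₃.1 x₄.1
    simp only [d4b, d3b] at h0 ha hb hc hd he ⊢
    linear_combination h0 + x₄.2 * ha - x₃.2 * hb + x₂.2 * hc - x₁.2 * hd + x₀.2 * he
  · -- the adapted basis of 𝔤
    set B' : Basis (Fin 7) ℝ (𝔥 × ℝ) :=
      ((b.reindex τe).prod (Basis.singleton (Fin 1) ℝ)).reindex finSumFinEquiv with hB'
    have h1 : ∀ m : Fin 7, (B' m).1 = (if h : m.1 < 6 then b (τ6 ⟨m.1, h⟩) else 0) := by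
      intro m
      fin_cases m <;>
        simp [hB', Basis.reindex_apply, Basis.prod_apply_inl_fst, Basis.prod_apply_inr_fst,
          τe, τ6] <;>
        rfl
    have h2 : ∀ m : Fin 7, (B' m).2 = δ 6 m := by
      intro m
      fin_cases m <;>
        simp [hB', Basis.reindex_apply, Basis.prod_apply_inl_snd, Basis.prod_apply_inr_snd, δ,
          Basis.prod_apply, Basis.singleton_apply,
          show ((finSumFinEquiv.symm (0 : Fin (6+1))) : Fin 6 ⊕ Fin 1) = Sum.inl 0 by decide,
          show ((finSumFinEquiv.symm (1 : Fin (6+1))) : Fin 6 ⊕ Fin 1) = Sum.inl 1 by decide,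
          show ((finSumFinEquiv.symm (2 : Fin (6+1))) : Fin 6 ⊕ Fin 1) = Sum.inl 2 by decide,
          show ((finSumFinEquiv.symm (3 : Fin (6+1))) : Fin 6 ⊕ Fin 1) = Sum.inl 3 by decide,
          show ((finSumFinEquiv.symm (4 : Fin (6+1))) : Fin 6 ⊕ Fin 1) = Sum.inl 4 by decide,
          show ((finSumFinEquiv.symm (5 : Fin (6+1))) : Fin 6 ⊕ Fin 1) = Sum.inl 5 by decide,
          show ((finSumFinEquiv.symm (6 : Fin (6+1))) : Fin 6 ⊕ Fin 1) = Sum.inr 0 by decide]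
    have hw : ∀ p q : Fin 7, ω ![(B' p).1, (B' q).1] = Ω7 p q := by
      intro p q
      rw [h1 p, h1 q]
      by_cases hp : p.1 < 6
      · by_cases hq : q.1 < 6
        · rw [dif_pos hp, dif_pos hq, hω]
          simp [Ωc, Ω7, δτ,
            show ((τ6 0).castSucc : Fin 7) = 1 by decide,
            show ((τ6 1).castSucc : Fin 7) = 0 by decide,
            show ((τ6 2).castSucc : Fin 7) = 3 by decide,
            show ((τ6 3).castSucc : Fin 7) = 2 by decide,
            show ((τ6 4).castSucc : Fin 7) = 5 by decide,
            show ((τ6 5).castSucc : Fin 7) = 4 by decide]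
          try ring
        · have hq6 : q = 6 := Fin.ext (by omega)
          subst hq6
          rw [dif_neg hq, ω.map_coord_zero 1 (by simp)]
          simp [Ω7, δ]
      · have hp6 : p = 6 := Fin.ext (by omega)
        subst hp6
        rw [dif_neg hp, ω.map_coord_zero 0 (by simp)]
        simp [Ω7, δ]
    have hp3 : ∀ p q r : Fin 7, ψp ![(B' p).1, (B' q).1, (B' r).1] = Ψ7 p q r := by
      intro p q r
      rw [h1 p, h1 q, h1 r]
      by_cases hp : p.1 < 6
      · by_cases hq : q.1 < 6
        · by_cases hr : r.1 < 6
          · rw [dif_pos hp, dif_pos hq, dif_pos hr, hψp]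
            simp [Ψpc, Ψ7, fm3_eq, δτ,
              show ((τ6 0).castSucc : Fin 7) = 1 by decide,
              show ((τ6 1).castSucc : Fin 7) = 0 by decide,
              show ((τ6 2).castSucc : Fin 7) = 3 by decide,
              show ((τ6 3).castSucc : Fin 7) = 2 by decide,
              show ((τ6 4).castSucc : Fin 7) = 5 by decide,
              show ((τ6 5).castSucc : Fin 7) = 4 by decide]
            try ring
          · have h6 : r = 6 := Fin.ext (by omega)
            subst h6
            rw [dif_neg hr, ψp.map_coord_zero 2 (by simp)]
            simp [Ψ7, fm3_eq, δ]
        · have h6 : q = 6 := Fin.ext (by omega)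
          subst h6
          rw [dif_neg hq, ψp.map_coord_zero 1 (by simp)]
          simp [Ψ7, fm3_eq, δ]
      · have h6 : p = 6 := Fin.ext (by omega)
        subst h6
        rw [dif_neg hp, ψp.map_coord_zero 0 (by simp)]
        simp [Ψ7, fm3_eq, δ]
    refine ⟨B', fun i j k l => ?_⟩
    rw [hw i j, hw k l, hw i k, hw j l, hw i l, hw j k,
      hp3 i j k, hp3 i j l, hp3 i k l, hp3 j k l, h2 i, h2 j, h2 k, h2 l]
    exact keyPoly i j k l

end
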